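/- Let n ≥ 1, m ∈ ℝ, r' > 0, and let p : ℤⁿ → ℂ be a symbol of order m. If there exists a constant K' > 0 such that 0 < |p(ξ)| ≤ K'·|ξ|^(m−r') for infinitely many ξ ∈ ℤⁿ \ {0}, then p(D) is not GS-r for any r with 0 ≤ r < r'. -/

import Mathlib

/-!
If `p(D)u = f` with `f ∈ H⁰` always has a solution `u ∈ H^{m-r}`, then along distinct
frequencies `ξ_j` with `p(ξ_j) ≠ 0` the ratio `(1 + ‖ξ_j‖²)^{m-r} / |p(ξ_j)|²` cannot tend to
infinity: otherwise pass to a subsequence where it exceeds `4^j` and put `f(ξ_j) = 2^{-j}`.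
Then `f ∈ H⁰`, but the forced solution `u(ξ_j) = 2^{-j} / p(ξ_j)` has every `H^{m-r}` term `≥ 1`.

On the infinite set where `0 < |p(ξ)| ≤ K' |ξ|^{m-r'}`, the comparability of `|ξ|²` with
`1 + ‖ξ‖²` away from `ξ = 0` bounds this ratio below by a multiple of `(1 + ‖ξ‖²)^{r'-r}`, which
tends to infinity because a ball contains only finitely many lattice points.
-/

open scoped BigOperators

/-- `|ξ| = Σⱼ |ξⱼ|`. -/
noncomputable def l1norm {n : ℕ} (ξ : Fin n → ℤ) : ℝ := ∑ j, |(ξ j : ℝ)|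

/-- `‖ξ‖² = Σⱼ ξⱼ²`. -/
noncomputable def l2normSq {n : ℕ} (ξ : Fin n → ℤ) : ℝ := ∑ j, ((ξ j : ℝ)) ^ 2

/-- `u ∈ H^k(𝕋ⁿ)` in terms of its Fourier coefficients. -/
def InSobolev {n : ℕ} (k : ℝ) (u : (Fin n → ℤ) → ℂ) : Prop :=
  Summable fun ξ : Fin n → ℤ => (1 + l2normSq ξ) ^ k * ‖u ξ‖ ^ 2

/-- Polynomial growth of Fourier coefficients (a distribution on `𝕋ⁿ`). -/
def PolyGrowth {n : ℕ} (u : (Fin n → ℤ) → ℂ) : Prop :=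
  ∃ C N : ℝ, 0 < C ∧ 0 < N ∧
    ∀ ξ, ‖u ξ‖ ≤ C * (1 + Real.sqrt (l2normSq ξ)) ^ N

/-- Rapidly decreasing Fourier coefficients (a smooth function on `𝕋ⁿ`). -/
def RapidDecay {n : ℕ} (v : (Fin n → ℤ) → ℂ) : Prop :=
  ∀ N : ℝ, 0 < N → ∃ C : ℝ, 0 < C ∧
    ∀ ξ, ‖v ξ‖ ≤ C * (1 + Real.sqrt (l2normSq ξ)) ^ (-N)

/-- `p` is a symbol of order `m`. -/
def SymbolOrder {n : ℕ} (m : ℝ) (p : (Fin n → ℤ) → ℂ) : Prop :=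
  ∃ C : ℝ, 0 < C ∧ ∀ ξ, ‖p ξ‖ ≤ C * (1 + l2normSq ξ) ^ (m / 2)

/-- `p(D)` is globally hypoelliptic with loss of `r` derivatives (GH-`r`). -/
def GHr {n : ℕ} (m r : ℝ) (p : (Fin n → ℤ) → ℂ) : Prop :=
  ∀ (k : ℝ) (u : (Fin n → ℤ) → ℂ), PolyGrowth u →
    InSobolev k (fun ξ => p ξ * u ξ) → InSobolev (k + m - r) u

/-- `p(D)` is globally solvable with loss of `r` derivatives (GS-`r`). -/
def GSr {n : ℕ} (m r : ℝ) (p : (Fin n → ℤ) → ℂ) : Prop :=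
  ∀ (k : ℝ) (f : (Fin n → ℤ) → ℂ), InSobolev k f → (∀ ξ, p ξ = 0 → f ξ = 0) →
    ∃ u : (Fin n → ℤ) → ℂ, InSobolev (k + m - r) u ∧ ∀ ξ, p ξ * u ξ = f ξ

/-- `p(D)` is globally hypoelliptic (GH). -/
def GloballyHypoelliptic {n : ℕ} (p : (Fin n → ℤ) → ℂ) : Prop :=
  ∀ u : (Fin n → ℤ) → ℂ, PolyGrowth u →
    RapidDecay (fun ξ => p ξ * u ξ) → RapidDecay u

open Filter Function

lemma Real.rpow_le_max_mul_rpow {x y c d : ℝ} (hx : 0 ≤ x) (hy : 0 < y) (hc : 0 ≤ c) (hd : 0 < d)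
    (hxy : x ≤ c * y) (hyx : y ≤ d * x) (s : ℝ) :
    x ^ s ≤ max (c ^ s) (d ^ (-s)) * y ^ s := by
  rcases le_total 0 s with hs | hs
  · calc x ^ s ≤ (c * y) ^ s := Real.rpow_le_rpow hx hxy hs
      _ = c ^ s * y ^ s := Real.mul_rpow hc hy.le
      _ ≤ _ := by gcongr; exact le_max_left _ _
  · calc x ^ s ≤ (d⁻¹ * y) ^ s :=
          Real.rpow_le_rpow_of_nonpos (by positivity) (by rwa [inv_mul_le_iff₀ hd]) hs
      _ = d ^ (-s) * y ^ s := by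
        rw [Real.mul_rpow (by positivity) hy.le, Real.inv_rpow hd.le, Real.rpow_neg hd.le]
      _ ≤ _ := by gcongr; exact le_max_right _ _

section

variable {n : ℕ}

lemma l1norm_nonneg (ξ : Fin n → ℤ) : 0 ≤ l1norm ξ :=
  Finset.sum_nonneg fun _ _ => abs_nonneg _

lemma l2normSq_nonneg (ξ : Fin n → ℤ) : 0 ≤ l2normSq ξ :=
  Finset.sum_nonneg fun _ _ => sq_nonneg _

lemma sq_le_l2normSq (ξ : Fin n → ℤ) (j : Fin n) : (ξ j : ℝ) ^ 2 ≤ l2normSq ξ :=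
  Finset.single_le_sum (fun i _ => sq_nonneg (ξ i : ℝ)) (Finset.mem_univ j)

lemma tendsto_l2normSq_cofinite : Tendsto (l2normSq (n := n)) cofinite atTop := by
  rw [← cocompact_eq_cofinite]
  refine tendsto_atTop_mono (fun ξ => ?_) tendsto_norm_cocompact_atTop
  refine (pi_norm_le_iff_of_nonneg (l2normSq_nonneg ξ)).2 fun j => ?_
  calc ‖ξ j‖ = |(ξ j : ℝ)| := Int.norm_eq_abs _
    _ ≤ (ξ j : ℝ) ^ 2 := by
        rw [← Int.cast_abs, Int.abs_eq_natAbs]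
        exact_mod_cast Int.natAbs_le_self_sq (ξ j)
    _ ≤ l2normSq ξ := sq_le_l2normSq ξ j

lemma l1norm_sq_le (ξ : Fin n → ℤ) : l1norm ξ ^ 2 ≤ n * l2normSq ξ := by
  have := sq_sum_le_card_mul_sum_sq (s := Finset.univ) (f := fun j => |(ξ j : ℝ)|)
  simpa only [sq_abs, Finset.card_univ, Fintype.card_fin, l2normSq, l1norm] using this

lemma l2normSq_le_l1norm_sq (ξ : Fin n → ℤ) : l2normSq ξ ≤ l1norm ξ ^ 2 := by
  have := Finset.sum_sq_le_sq_sum_of_nonneg (s := Finset.univ) (f := fun j => |(ξ j : ℝ)|)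
    fun j _ => abs_nonneg _
  simpa only [sq_abs, l2normSq, l1norm] using this

lemma one_le_l2normSq {ξ : Fin n → ℤ} (hξ : ξ ≠ 0) : 1 ≤ l2normSq ξ := by
  obtain ⟨j, hj⟩ := Function.ne_iff.1 hξ
  calc (1 : ℝ) ≤ (ξ j : ℝ) ^ 2 := mod_cast (one_le_sq_iff_one_le_abs _).2 (Int.one_le_abs hj)
    _ ≤ l2normSq ξ := sq_le_l2normSq ξ j

lemma exists_l1norm_sq_rpow_le (t : ℝ) : ∃ C > 0, ∀ ξ : Fin n → ℤ, ξ ≠ 0 →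
    (l1norm ξ ^ 2) ^ t ≤ C * (1 + l2normSq ξ) ^ t := by
  refine ⟨max ((n : ℝ) ^ t) (2 ^ (-t)), by positivity, fun ξ hξ => ?_⟩
  have hone := one_le_l2normSq hξ
  have hl2_le := l2normSq_le_l1norm_sq ξ
  refine Real.rpow_le_max_mul_rpow (sq_nonneg _) (by linarith) n.cast_nonneg two_pos ?_
    (by linarith) t
  exact (l1norm_sq_le ξ).trans (by gcongr; linarith)

lemma inSobolev_zero_extend_inv_two_pow {y : ℕ → (Fin n → ℤ)} (hy : Injective y) :
    InSobolev 0 (extend y (fun j => ((2 : ℂ) ^ j)⁻¹) 0) := by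
  unfold InSobolev
  simp only [Real.rpow_zero, one_mul]
  rw [← hy.summable_iff fun ξ hξ => by simp [extend_apply' _ _ _ (by simpa using hξ)]]
  have hgeom : Summable fun j : ℕ => ((4 : ℝ) ^ j)⁻¹ := by
    simpa only [inv_pow] using
      summable_geometric_of_lt_one (by norm_num : (0 : ℝ) ≤ 4⁻¹) (by norm_num)
  refine hgeom.congr fun j => ?_
  rw [comp_apply, hy.extend_apply, norm_inv, norm_pow, Complex.norm_ofNat, inv_pow, ← pow_mul,
    pow_mul']
  norm_num

theorem not_GSr_of_tendsto {m r : ℝ} {p : (Fin n → ℤ) → ℂ} {x : ℕ → (Fin n → ℤ)}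
    (hx : Injective x) (hpx : ∀ j, p (x j) ≠ 0)
    (hratio : Tendsto (fun j => (1 + l2normSq (x j)) ^ (m - r) / ‖p (x j)‖ ^ 2) atTop atTop) :
    ¬ GSr m r p := by
  intro hGS
  obtain ⟨φ, hφ, hratio_ge⟩ :=
    extraction_forall_of_eventually fun j => tendsto_atTop.1 hratio ((4 : ℝ) ^ j)
  set y := x ∘ φ
  have hy : Injective y := hx.comp hφ.injective
  set f := extend y (fun j => ((2 : ℂ) ^ j)⁻¹) 0
  have hfp : ∀ ξ, p ξ = 0 → f ξ = 0 := by
    intro ξ hξ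
    refine extend_apply' _ _ _ ?_
    rintro ⟨j, rfl⟩
    exact hpx _ hξ
  have hfy : ∀ j, f (y j) = ((2 : ℂ) ^ j)⁻¹ := hy.extend_apply _ _
  obtain ⟨u, hu, hpu⟩ := hGS 0 f (inSobolev_zero_extend_inv_two_pow hy) hfp
  have hterm : ∀ j, 1 ≤ (1 + l2normSq (y j)) ^ (0 + m - r) * ‖u (y j)‖ ^ 2 := by
    intro j
    have hpy : 0 < ‖p (y j)‖ := norm_pos_iff.2 (hpx _)
    have hu : ‖u (y j)‖ = ((2 : ℝ) ^ j)⁻¹ / ‖p (y j)‖ := by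
      rw [eq_div_iff hpy.ne', mul_comm, ← norm_mul, hpu, hfy]
      simp
    have hsplit : (1 + l2normSq (y j)) ^ (0 + m - r) * ‖u (y j)‖ ^ 2 =
        (1 + l2normSq (y j)) ^ (m - r) / ‖p (y j)‖ ^ 2 / 4 ^ j := by
      rw [hu, zero_add]
      field_simp
      norm_num [← pow_mul, pow_mul']
    rw [hsplit, one_le_div (by positivity)]
    exact hratio_ge j
  obtain ⟨j, hj⟩ :=
    ((hu.comp_injective hy).tendsto_atTop_zero.eventually (gt_mem_nhds one_pos)).exists
  exact (hterm j).not_gt hj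

theorem not_GSr_of_infinite_of_sq_le {m r r' E : ℝ} {p : (Fin n → ℤ) → ℂ}
    {S : Set (Fin n → ℤ)} (hS : S.Infinite) (hE : 0 < E) (hr : r < r')
    (hpS : ∀ ξ ∈ S, p ξ ≠ 0 ∧ ‖p ξ‖ ^ 2 ≤ E * (1 + l2normSq ξ) ^ (m - r')) :
    ¬ GSr m r p := by
  set x : ℕ → (Fin n → ℤ) := fun j => hS.natEmbedding _ j
  have hx : Injective x := Subtype.val_injective.comp (hS.natEmbedding _).injective
  have hxS : ∀ j, x j ∈ S := fun j => (hS.natEmbedding _ j).2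
  refine not_GSr_of_tendsto hx (fun j => (hpS _ (hxS j)).1) ?_
  have hl2 : Tendsto (fun j => 1 + l2normSq (x j)) atTop atTop :=
    tendsto_atTop_add_const_left _ 1 <|
      tendsto_l2normSq_cofinite.comp (Nat.cofinite_eq_atTop ▸ hx.tendsto_cofinite)
  refine tendsto_atTop_mono (fun j => ?_)
    (((tendsto_rpow_atTop (sub_pos.2 hr)).comp hl2).atTop_div_const hE)
  obtain ⟨hp0, hpE⟩ := hpS _ (hxS j)
  have hW : 0 < 1 + l2normSq (x j) := by linarith [l2normSq_nonneg (x j)]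
  rw [comp_apply, div_le_div_iff₀ hE (by positivity)]
  calc (1 + l2normSq (x j)) ^ (r' - r) * ‖p (x j)‖ ^ 2
      ≤ (1 + l2normSq (x j)) ^ (r' - r) * (E * (1 + l2normSq (x j)) ^ (m - r')) := by gcongr
    _ = (1 + l2normSq (x j)) ^ (m - r) * E := by
      rw [mul_left_comm, ← Real.rpow_add hW, mul_comm]
      ring_nf

end

theorem stmt_9_general {n : ℕ} (m r' : ℝ)
    (p : (Fin n → ℤ) → ℂ)
    (K' : ℝ) (hK' : 0 < K')
    (hinf : {ξ : Fin n → ℤ | ξ ≠ 0 ∧ 0 < ‖p ξ‖ ∧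
        ‖p ξ‖ ≤ K' * l1norm ξ ^ (m - r')}.Infinite) :
    ∀ r : ℝ, 0 ≤ r → r < r' → ¬ GSr m r p := by
  intro r _ hr
  obtain ⟨C, hC, hl1⟩ := exists_l1norm_sq_rpow_le (n := n) (m - r')
  refine not_GSr_of_infinite_of_sq_le hinf (by positivity : 0 < K' ^ 2 * C) hr ?_
  rintro ξ ⟨hξ, hp0, hpK⟩
  refine ⟨norm_pos_iff.1 hp0, ?_⟩
  calc ‖p ξ‖ ^ 2 ≤ (K' * l1norm ξ ^ (m - r')) ^ 2 := by gcongr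
    _ = K' ^ 2 * (l1norm ξ ^ 2) ^ (m - r') := by
      rw [mul_pow, Real.rpow_pow_comm (l1norm_nonneg ξ)]
    _ ≤ K' ^ 2 * (C * (1 + l2normSq ξ) ^ (m - r')) := by gcongr; exact hl1 ξ hξ
    _ = K' ^ 2 * C * (1 + l2normSq ξ) ^ (m - r') := by ring

theorem stmt_9 {n : ℕ} (hn : 1 ≤ n) (m r' : ℝ) (hr' : 0 < r')
    (p : (Fin n → ℤ) → ℂ) (hp : SymbolOrder m p)
    (K' : ℝ) (hK' : 0 < K')
    (hinf : {ξ : Fin n → ℤ | ξ ≠ 0 ∧ 0 < ‖p ξ‖ ∧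
        ‖p ξ‖ ≤ K' * l1norm ξ ^ (m - r')}.Infinite) :
    ∀ r : ℝ, 0 ≤ r → r < r' → ¬ GSr m r p :=
  stmt_9_general m r' p K' hK' hinf
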